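/- Let (p_n), (q_n) be sequences with 0 < q_n < p_n ≤ 1 for all n, p_n → 1, q_n → 1, p_n^n → a and q_n^n → b for some real numbers a, b. Then for every x ∈ [0,1], lim_{n→∞} [n]_{p_n,q_n} · B_{n,p_n,q_n}((t-x)²; x) = a x - a x². -/

import Mathlib

open Finset Set Filter Topology

/-- The (p,q)-integer `[n]_{p,q} = ∑_{i=0}^{n-1} p^(n-1-i) q^i`. -/
noncomputable def pqInt (p q : ℝ) (n : ℕ) : ℝ :=
  ∑ i ∈ Finset.range n, p ^ (n - 1 - i) * q ^ i

/-- The (p,q)-factorial `[n]_{p,q}! = ∏_{j=1}^n [j]_{p,q}`. -/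
noncomputable def pqFactorial (p q : ℝ) (n : ℕ) : ℝ :=
  ∏ j ∈ Finset.range n, pqInt p q (j + 1)

/-- The (p,q)-binomial coefficient. -/
noncomputable def pqChoose (p q : ℝ) (n k : ℕ) : ℝ :=
  pqFactorial p q n / (pqFactorial p q k * pqFactorial p q (n - k))

/-- The node `p^(n-k) [k]_{p,q} / [n]_{p,q}` of the (p,q)-Bernstein operator. -/
noncomputable def pqNode (p q : ℝ) (n k : ℕ) : ℝ :=
  p ^ (n - k) * pqInt p q k / pqInt p q n

/-- The basis function
`p^((k(k-1)-n(n-1))/2) C(n,k)_{p,q} x^k ∏_{s=0}^{n-k-1} (p^s - q^s x)`,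
where `p^((k(k-1)-n(n-1))/2)` is written as `p^(k(k-1)/2) / p^(n(n-1)/2)`. -/
noncomputable def pqBasis (p q : ℝ) (n k : ℕ) (x : ℝ) : ℝ :=
  (p ^ (k.choose 2) / p ^ (n.choose 2)) * pqChoose p q n k * x ^ k *
    ∏ s ∈ Finset.range (n - k), (p ^ s - q ^ s * x)

/-- The (p,q)-Bernstein operator `B_{n,p,q}(f;x)`. -/
noncomputable def pqBernstein (p q : ℝ) (n : ℕ) (f : ℝ → ℝ) (x : ℝ) : ℝ :=
  ∑ k ∈ Finset.range (n + 1), pqBasis p q n k x * f (pqNode p q n k)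

/-- The bivariate (p,q)-Bernstein operator
`B_{n,m}^{(p₁,q₁),(p₂,q₂)}(f;x,y)`. -/
noncomputable def pqBernstein2 (p₁ q₁ p₂ q₂ : ℝ) (n m : ℕ)
    (f : ℝ → ℝ → ℝ) (x y : ℝ) : ℝ :=
  ∑ k ∈ Finset.range (n + 1), ∑ j ∈ Finset.range (m + 1),
    pqBasis p₁ q₁ n k x * pqBasis p₂ q₂ m j y *
      f (pqNode p₁ q₁ n k) (pqNode p₂ q₂ m j)

/-!
The (p,q)-Bernstein basis is a partition of unity (induction on `n` via the (p,q)-Pascal rule),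
and absorbing the node into the basis, `b_{n+1,k+1}(x) · t_{n+1,k+1} = x · b_{n,k}(x)`, turns
`B_{n+1}(t f(t); x)` into `x · B_n(f ∘ φ; x)` for the affine map
`φ t = (p^n + q [n] t) / [n+1]`.
This gives `B(1) = 1`, `B(t) = x` and `B(t²) = (p^n x + q [n] x²) / [n+1]`, and since
`[n+1] = p^n + q [n]` the exact identity `[n+1] · B_{n+1}((t - x)²; x) = p^n (x - x²)`.
The limit is then that of `p_n^n / p_n`, which is `a`.
-/

section Algebra

variable (p q : ℝ)

@[simp] lemma pqInt_zero : pqInt p q 0 = 0 := by simp [pqInt]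

@[simp] lemma pqInt_one : pqInt p q 1 = 1 := by simp [pqInt]

lemma pqInt_add (m n : ℕ) :
    pqInt p q (m + n) = p ^ n * pqInt p q m + q ^ m * pqInt p q n := by
  rw [pqInt, sum_range_add, pqInt, pqInt, mul_sum, mul_sum]
  congr 1 <;> refine sum_congr rfl fun i hi => ?_ <;> rw [Finset.mem_range] at hi
  · rw [show m + n - 1 - i = n + (m - 1 - i) by omega, pow_add]; ring
  · rw [show m + n - 1 - (m + i) = n - 1 - i by omega, pow_add]; ring

lemma pqInt_succ (n : ℕ) : pqInt p q (n + 1) = p ^ n + q * pqInt p q n := by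
  simpa [add_comm 1 n] using pqInt_add p q 1 n

@[simp] lemma pqFactorial_zero : pqFactorial p q 0 = 1 := prod_range_zero _

lemma pqFactorial_succ (n : ℕ) :
    pqFactorial p q (n + 1) = pqFactorial p q n * pqInt p q (n + 1) :=
  prod_range_succ _ _

end Algebra

section Positive

variable {p q : ℝ} (hp : 0 < p) (hq : 0 ≤ q)
include hp hq

lemma pqInt_succ_pos (n : ℕ) : 0 < pqInt p q (n + 1) :=
  sum_pos' (fun _ _ => by positivity) ⟨0, by simp, by simpa using pow_pos hp n⟩

lemma pqFactorial_pos (n : ℕ) : 0 < pqFactorial p q n :=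
  prod_pos fun i _ => pqInt_succ_pos hp hq i

lemma pqChoose_zero_right (n : ℕ) : pqChoose p q n 0 = 1 := by
  simp [pqChoose, (pqFactorial_pos hp hq n).ne']

lemma pqChoose_self (n : ℕ) : pqChoose p q n n = 1 := by
  simp [pqChoose, (pqFactorial_pos hp hq n).ne']

lemma pqInt_succ_mul_pqChoose_succ_succ (n k : ℕ) :
    pqInt p q (k + 1) * pqChoose p q (n + 1) (k + 1) =
      pqInt p q (n + 1) * pqChoose p q n k := by
  have := (pqFactorial_pos hp hq k).ne'
  have := (pqFactorial_pos hp hq n).ne'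
  have := (pqFactorial_pos hp hq (n - k)).ne'
  have := (pqInt_succ_pos hp hq k).ne'
  rw [pqChoose, pqChoose, Nat.add_sub_add_right, pqFactorial_succ, pqFactorial_succ]
  field_simp

lemma pqChoose_succ_succ {n k : ℕ} (hkn : k < n) :
    pqChoose p q (n + 1) (k + 1) =
      p ^ (k + 1) * pqChoose p q n (k + 1) + q ^ (n - k) * pqChoose p q n k := by
  obtain ⟨m, rfl⟩ := Nat.exists_eq_add_of_lt hkn
  have hsplit : pqInt p q (k + m + 1 + 1)
      = p ^ (k + 1) * pqInt p q (m + 1) + q ^ (m + 1) * pqInt p q (k + 1) := by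
    rw [show k + m + 1 + 1 = (m + 1) + (k + 1) by ring, pqInt_add]
  have := (pqFactorial_pos hp hq k).ne'
  have := (pqFactorial_pos hp hq m).ne'
  have := (pqFactorial_pos hp hq (k + m + 1)).ne'
  have := (pqInt_succ_pos hp hq k).ne'
  have := (pqInt_succ_pos hp hq m).ne'
  simp only [pqChoose, show k + m + 1 + 1 - (k + 1) = m + 1 by omega,
    show k + m + 1 - (k + 1) = m by omega, show k + m + 1 - k = m + 1 by omega,
    pqFactorial_succ]
  field_simp
  rw [hsplit]
  ring

end Positive

lemma Nat.succ_choose_two (k : ℕ) : (k + 1).choose 2 = k.choose 2 + k := by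
  simp [Nat.choose_succ_succ, add_comm]

section Basis

variable {p q : ℝ} (hp : 0 < p) (hq : 0 ≤ q) (x : ℝ)
include hp hq

lemma pqBasis_self (n : ℕ) : pqBasis p q n n x = x ^ n := by
  simp [pqBasis, pqChoose_self hp hq, div_self (pow_ne_zero _ hp.ne')]

lemma pqBasis_succ_zero (n : ℕ) :
    pqBasis p q (n + 1) 0 x = pqBasis p q n 0 x * (1 - (q / p) ^ n * x) := by
  have := hp.ne'
  simp only [pqBasis, pqChoose_zero_right hp hq, Nat.succ_choose_two, Nat.sub_zero,
    prod_range_succ, pow_add, div_pow]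
  field_simp
  ring_nf

lemma pqBasis_succ_succ {n k : ℕ} (hkn : k < n) :
    pqBasis p q (n + 1) (k + 1) x =
      pqBasis p q n (k + 1) x * (1 - (q / p) ^ (n - (k + 1)) * x) +
        (q / p) ^ (n - k) * x * pqBasis p q n k x := by
  obtain ⟨m, rfl⟩ := Nat.exists_eq_add_of_lt hkn
  have := hp.ne'
  simp only [pqBasis, pqChoose_succ_succ hp hq hkn, show k + m + 1 + 1 - (k + 1) = m + 1 by omega,
    show k + m + 1 - (k + 1) = m by omega, show k + m + 1 - k = m + 1 by omega,
    prod_range_succ, Nat.succ_choose_two, pow_add, div_pow]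
  field_simp

lemma sum_pqBasis (n : ℕ) : ∑ k ∈ range (n + 1), pqBasis p q n k x = 1 := by
  induction n with
  | zero => simp [pqBasis_self hp hq]
  | succ n ih =>
    set r := q / p
    have hsplit : ∑ k ∈ range (n + 1), pqBasis p q n k x * (1 - r ^ (n - k) * x) +
        ∑ k ∈ range (n + 1), r ^ (n - k) * x * pqBasis p q n k x = 1 := by
      rw [← sum_add_distrib]
      exact (sum_congr rfl fun k _ => by ring).trans ih
    rw [sum_range_succ', sum_range_succ (fun k => r ^ (n - k) * x * pqBasis p q n k x)] at hsplit
    rw [sum_range_succ', sum_range_succ, ← hsplit,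
      sum_congr rfl fun k hk => pqBasis_succ_succ hp hq x (mem_range.mp hk), sum_add_distrib,
      pqBasis_succ_zero hp hq, pqBasis_self hp hq, pqBasis_self hp hq]
    simp only [Nat.sub_zero, Nat.sub_self, pow_zero, pow_succ]
    ring

lemma pqBasis_succ_succ_mul_pqNode {n k : ℕ} (hkn : k ≤ n) :
    pqBasis p q (n + 1) (k + 1) x * pqNode p q (n + 1) (k + 1) = x * pqBasis p q n k x := by
  obtain ⟨m, rfl⟩ := Nat.exists_eq_add_of_le hkn
  have hk := (pqInt_succ_pos hp hq k).ne'
  have hn := (pqInt_succ_pos hp hq (k + m)).ne'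
  have hC : pqChoose p q (k + m + 1) (k + 1) =
      pqInt p q (k + m + 1) * pqChoose p q (k + m) k / pqInt p q (k + 1) := by
    rw [eq_div_iff hk, mul_comm, pqInt_succ_mul_pqChoose_succ_succ hp hq]
  have := hp.ne'
  simp only [pqBasis, pqNode, hC, show k + m + 1 - (k + 1) = m by omega,
    show k + m - k = m by omega, Nat.succ_choose_two, pow_add]
  field_simp

end Basis

section Operator

variable {p q : ℝ} (n : ℕ) (x : ℝ)

lemma pqBernstein_add (f g : ℝ → ℝ) :
    pqBernstein p q n (fun t => f t + g t) x = pqBernstein p q n f x + pqBernstein p q n g x := by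
  simp only [pqBernstein, mul_add, sum_add_distrib]

lemma pqBernstein_const_mul (c : ℝ) (f : ℝ → ℝ) :
    pqBernstein p q n (fun t => c * f t) x = c * pqBernstein p q n f x := by
  simp only [pqBernstein, mul_sum]
  exact sum_congr rfl fun _ _ => by ring

variable (hp : 0 < p) (hq : 0 ≤ q)
include hp hq

lemma pqBernstein_const (c : ℝ) : pqBernstein p q n (fun _ => c) x = c := by
  rw [pqBernstein, ← sum_mul, sum_pqBasis hp hq, one_mul]

lemma pqInt_mul_pqNode {k : ℕ} (hkn : k ≤ n) :
    pqInt p q n * pqNode p q n k = p ^ (n - k) * pqInt p q k := by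
  rcases n with _ | n
  · simp [Nat.le_zero.mp hkn]
  · rw [pqNode, mul_div_cancel₀ _ (pqInt_succ_pos hp hq n).ne']

lemma pqNode_succ_succ {k : ℕ} (hkn : k ≤ n) :
    pqNode p q (n + 1) (k + 1) =
      (p ^ n + q * (pqInt p q n * pqNode p q n k)) / pqInt p q (n + 1) := by
  obtain ⟨m, rfl⟩ := Nat.exists_eq_add_of_le hkn
  rw [pqInt_mul_pqNode _ hp hq hkn, pqNode, pqInt_succ p q k,
    show k + m + 1 - (k + 1) = m by omega, show k + m - k = m by omega]
  ring

lemma pqBernstein_succ_mul (f : ℝ → ℝ) :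
    pqBernstein p q (n + 1) (fun t => t * f t) x =
      x * pqBernstein p q n
        (fun t => f ((p ^ n + q * (pqInt p q n * t)) / pqInt p q (n + 1))) x := by
  have hnode_zero : pqNode p q (n + 1) 0 = 0 := by simp [pqNode]
  rw [pqBernstein, sum_range_succ', hnode_zero, zero_mul, mul_zero, add_zero, pqBernstein, mul_sum]
  refine sum_congr rfl fun k hk => ?_
  have hkn : k ≤ n := Nat.lt_succ_iff.mp (mem_range.mp hk)
  rw [← mul_assoc, pqBasis_succ_succ_mul_pqNode hp hq x hkn, pqNode_succ_succ n hp hq hkn,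
    mul_assoc]

lemma pqBernstein_id : pqBernstein p q (n + 1) (fun t => t) x = x := by
  simpa [pqBernstein_const _ _ hp hq] using pqBernstein_succ_mul n x hp hq (fun _ => 1)

lemma pqBernstein_sq :
    pqBernstein p q (n + 1) (fun t => t ^ 2) x =
      (p ^ n * x + q * pqInt p q n * x ^ 2) / pqInt p q (n + 1) := by
  have hsq : (fun t : ℝ => t ^ 2) = fun t => t * t := by funext t; ring
  have hlin : (fun t => (p ^ n + q * (pqInt p q n * t)) / pqInt p q (n + 1)) =
      fun t => p ^ n / pqInt p q (n + 1) + q * pqInt p q n / pqInt p q (n + 1) * t := by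
    funext t; ring
  -- `B_0(t) = 0` rather than `x`, but the factor `[0] = 0` hides the difference.
  have hmoment : pqInt p q n * pqBernstein p q n (fun t => t) x = pqInt p q n * x := by
    rcases n with _ | m
    · simp
    · rw [pqBernstein_id m x hp hq]
  rw [hsq, pqBernstein_succ_mul n x hp hq, hlin, pqBernstein_add, pqBernstein_const _ _ hp hq,
    pqBernstein_const_mul]
  linear_combination (q * x / pqInt p q (n + 1)) * hmoment

lemma pqInt_mul_pqBernstein_sub_sq :
    pqInt p q (n + 1) * pqBernstein p q (n + 1) (fun t => (t - x) ^ 2) x = p ^ n * (x - x ^ 2) := by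
  have hexp : (fun t => (t - x) ^ 2) = fun t => (t ^ 2 + (-2 * x) * t) + x ^ 2 := by
    funext t; ring
  have := (pqInt_succ_pos hp hq n).ne'
  rw [hexp, pqBernstein_add, pqBernstein_add, pqBernstein_const_mul, pqBernstein_const _ _ hp hq,
    pqBernstein_sq _ _ hp hq, pqBernstein_id _ _ hp hq]
  field_simp
  rw [pqInt_succ]
  ring

end Operator

theorem pqBernstein_second_central_moment_limit_general (p q : ℕ → ℝ) (a : ℝ)
    (h : ∀ n, 0 < q n ∧ q n < p n ∧ p n ≤ 1)
    (hp : Filter.Tendsto p Filter.atTop (nhds 1))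
    (ha : Filter.Tendsto (fun n => (p n) ^ n) Filter.atTop (nhds a))
    (x : ℝ) :
    Filter.Tendsto
      (fun n => pqInt (p n) (q n) n *
        pqBernstein (p n) (q n) n (fun t => (t - x) ^ 2) x)
      Filter.atTop (nhds (a * x - a * x ^ 2)) := by
  have hp_pos : ∀ n, 0 < p n := fun n => (h n).1.trans (h n).2.1
  have hlim : Tendsto (fun n => p n ^ n / p n * (x - x ^ 2)) atTop (𝓝 (a * x - a * x ^ 2)) := by
    rw [← mul_sub]
    simpa using (ha.div hp one_ne_zero).mul_const (x - x ^ 2)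
  refine hlim.congr' ?_
  filter_upwards [eventually_ge_atTop 1] with n hn
  obtain ⟨m, rfl⟩ := Nat.exists_eq_add_of_le' hn
  rw [pqInt_mul_pqBernstein_sub_sq m x (hp_pos _) (h _).1.le, pow_succ,
    mul_div_cancel_right₀ _ (hp_pos _).ne']

theorem pqBernstein_second_central_moment_limit (p q : ℕ → ℝ) (a b : ℝ)
    (h : ∀ n, 0 < q n ∧ q n < p n ∧ p n ≤ 1)
    (hp : Filter.Tendsto p Filter.atTop (nhds 1))
    (hq : Filter.Tendsto q Filter.atTop (nhds 1))
    (ha : Filter.Tendsto (fun n => (p n) ^ n) Filter.atTop (nhds a))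
    (hb : Filter.Tendsto (fun n => (q n) ^ n) Filter.atTop (nhds b))
    (x : ℝ) (hx : x ∈ Set.Icc (0 : ℝ) 1) :
    Filter.Tendsto
      (fun n => pqInt (p n) (q n) n *
        pqBernstein (p n) (q n) n (fun t => (t - x) ^ 2) x)
      Filter.atTop (nhds (a * x - a * x ^ 2)) :=
  pqBernstein_second_central_moment_limit_general p q a h hp ha x
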